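/- The sequence of A-modules 0 → A —φ→ A² —ψ→ J/J² → 0 is exact, where φ(c) = (wc, −zc) and ψ(a,b) is the class of ax + by in J/J². In particular, J/J² has projective dimension 1 as an A-module. -/

import Mathlib

/-!
Setting: `R := ℂ[x,y,z,w]/(xw − yz)`, `J = (x,y) ⊆ R`, `A := R/J ≅ ℂ[z,w]`;
the conormal module `J/J²` is an `A`-module (`Jid.Cotangent`).

STATEMENT 2: the sequence of `A`-modules `0 → A —φ→ A² —ψ→ J/J² → 0` is exact, where
`φ(c) = (wc, −zc)` and `ψ(a,b)` is the class of `ax + by` in `J/J²`.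
In particular, `J/J²` has projective dimension 1 as an `A`-module (given the displayed
length-one free resolution, this amounts to `J/J²` not being projective).
-/

open MvPolynomial

set_option synthInstance.maxHeartbeats 1000000
set_option maxHeartbeats 1000000

noncomputable section

abbrev Pring : Type := MvPolynomial (Fin 4) ℂ

abbrev Rring : Type := Pring ⧸ Ideal.span {(X 0 * X 3 - X 1 * X 2 : Pring)}

def xR : Rring := Ideal.Quotient.mk _ (X 0)
def yR : Rring := Ideal.Quotient.mk _ (X 1)
def zR : Rring := Ideal.Quotient.mk _ (X 2)
def wR : Rring := Ideal.Quotient.mk _ (X 3)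

def Jid : Ideal Rring := Ideal.span {xR, yR}

abbrev Aring : Type := Rring ⧸ Jid

def zA : Aring := Ideal.Quotient.mk _ zR
def wA : Aring := Ideal.Quotient.mk _ wR

/-- The class of `x` in `J/J²`. -/
def xbar : Jid.Cotangent := Jid.toCotangent ⟨xR, Ideal.subset_span (Set.mem_insert _ _)⟩

/-- The class of `y` in `J/J²`. -/
def ybar : Jid.Cotangent := Jid.toCotangent ⟨yR, Ideal.subset_span (Set.mem_insert_of_mem _ rfl)⟩

/-!
The relation `x·w = y·z` gives `ψ ∘ φ = 0`. Conversely, if `a·x + b·y ∈ (x,y)² + (xw − yz)` in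
`ℂ[x,y,z,w]`, differentiating with respect to `x` (resp. `y`) and then setting `x = y = 0` kills
`(x,y)²` and leaves `a = δ·w`, `b = −δ·z` on the plane. Setting `x = y = 0` also embeds `A` into
`ℂ[x,y,z,w]` as `ℂ[z,w]`, so `w` is a nonzerodivisor and `φ` is injective. If `J/J²` were
projective the sequence would split, so `φ` would have a retraction, forcing `1 ∈ (w, z)`, which
fails at the origin.
-/

theorem Derivation.apply_mem_of_mem_sq {R A : Type*} [CommSemiring R] [CommRing A] [Algebra R A]
    (D : Derivation R A A) {I : Ideal A} {a : A} (ha : a ∈ I ^ 2) : D a ∈ I := by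
  rw [sq] at ha
  refine Submodule.mul_induction_on ha (fun b hb c hc => ?_) fun b c hb hc => ?_
  · rw [D.leibniz, smul_eq_mul, smul_eq_mul]
    exact I.add_mem (I.mul_mem_right _ hb) (I.mul_mem_right _ hc)
  · rw [map_add]
    exact I.add_mem hb hc

theorem Function.Exact.exists_leftInverse_of_projective {R M N P : Type*} [Ring R]
    [AddCommGroup M] [AddCommGroup N] [AddCommGroup P] [Module R M] [Module R N] [Module R P]
    [Module.Projective R P] {f : M →ₗ[R] N} {g : N →ₗ[R] P} (h : Function.Exact f g)
    (hf : Function.Injective f) (hg : Function.Surjective g) :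
    ∃ l : N →ₗ[R] M, l ∘ₗ f = LinearMap.id :=
  ((h.split_tfae hf hg).out 0 1).mp
    (g.exists_rightInverse_of_surjective (LinearMap.range_eq_top_of_surjective g hg))

theorem one_mem_span_of_leftInverse {A : Type*} [CommRing A] {f : A →ₗ[A] A × A}
    {l : A × A →ₗ[A] A} (hl : l ∘ₗ f = LinearMap.id) {a b : A} (hf : f 1 = (a, b)) :
    (1 : A) ∈ Ideal.span {a, b} := by
  refine Ideal.mem_span_pair.mpr ⟨l (1, 0), l (0, 1), ?_⟩
  have hdecomp : (a, b) = a • ((1 : A), (0 : A)) + b • ((0 : A), (1 : A)) := by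
    ext <;> simp
  calc l (1, 0) * a + l (0, 1) * b = l (f 1) := by
        rw [hf, hdecomp, map_add, map_smul, map_smul, smul_eq_mul, smul_eq_mul, mul_comm a,
          mul_comm b]
    _ = 1 := LinearMap.congr_fun hl 1

abbrev toRring : Pring →+* Rring := Ideal.Quotient.mk _

def toAring : Pring →+* Aring := (Ideal.Quotient.mk Jid).comp toRring

theorem toAring_surjective : Function.Surjective toAring :=
  Ideal.Quotient.mk_surjective.comp Ideal.Quotient.mk_surjective

def xyIdeal : Ideal Pring := Ideal.span {X 0, X 1}

theorem Jid_eq_map_xyIdeal : Jid = xyIdeal.map toRring := by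
  rw [xyIdeal, Ideal.map_span, Set.image_pair]
  rfl

def planeSubst : Pring →ₐ[ℂ] Pring := aeval ![0, 0, X 2, X 3]

@[simp]
theorem planeSubst_X (i : Fin 4) : planeSubst (X i) = ![0, 0, X 2, X 3] i := aeval_X _ _

theorem xyIdeal_le_ker_planeSubst : xyIdeal ≤ RingHom.ker planeSubst := by
  rw [xyIdeal, Ideal.span_le]
  rintro _ (rfl | rfl) <;> simp

theorem planeSubst_pderiv_of_mem_sq {p : Pring} (i : Fin 4) (hp : p ∈ xyIdeal ^ 2) :
    planeSubst (pderiv i p) = 0 :=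
  xyIdeal_le_ker_planeSubst ((pderiv i).apply_mem_of_mem_sq hp)

theorem planeSubst_eq_of_add_eq {a b p δ : Pring} (hp : p ∈ xyIdeal ^ 2)
    (h : a * X 0 + b * X 1 = p + δ * (X 0 * X 3 - X 1 * X 2)) :
    planeSubst a = planeSubst δ * X 3 ∧ planeSubst b = -(planeSubst δ * X 2) := by
  constructor
  · simpa [pderiv_X, Pi.single_apply, planeSubst_pderiv_of_mem_sq 0 hp] using
      congrArg (planeSubst ∘ pderiv 0) h
  · simpa [pderiv_X, Pi.single_apply, planeSubst_pderiv_of_mem_sq 1 hp] using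
      congrArg (planeSubst ∘ pderiv 1) h

theorem toAring_planeSubst (p : Pring) : toAring (planeSubst p) = toAring p := by
  have hX0 : toAring (X 0) = 0 :=
    Ideal.Quotient.eq_zero_iff_mem.mpr (Ideal.subset_span (by simp [xR]))
  have hX1 : toAring (X 1) = 0 :=
    Ideal.Quotient.eq_zero_iff_mem.mpr (Ideal.subset_span (by simp [yR]))
  suffices toAring.comp planeSubst.toRingHom = toAring from RingHom.congr_fun this p
  refine MvPolynomial.ringHom_ext (fun r => by simp) fun i => ?_
  fin_cases i <;> simp [hX0, hX1]

def planeEmbedding : Aring →+* Pring :=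
  Ideal.Quotient.lift Jid
    (Ideal.Quotient.lift _ planeSubst.toRingHom fun _ hp =>
      (Ideal.span_singleton_le_iff_mem (RingHom.ker _)).mpr (by simp) hp)
    (by
      refine fun _ hr => (Ideal.span_le.mpr ?_ : Jid ≤ RingHom.ker _) hr
      rintro _ (rfl | rfl) <;> exact planeSubst_X _)

theorem planeEmbedding_toAring (p : Pring) : planeEmbedding (toAring p) = planeSubst p := rfl

@[simp]
theorem planeEmbedding_zA : planeEmbedding zA = X 2 := planeSubst_X 2

@[simp]
theorem planeEmbedding_wA : planeEmbedding wA = X 3 := planeSubst_X 3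

theorem planeEmbedding_injective : Function.Injective planeEmbedding := by
  refine Function.LeftInverse.injective (g := toAring) fun a => ?_
  obtain ⟨p, rfl⟩ := toAring_surjective a
  rw [planeEmbedding_toAring, toAring_planeSubst]

theorem isLeftRegular_wA : IsLeftRegular wA := by
  intro b c h
  apply planeEmbedding_injective
  refine mul_left_cancel₀ (X_ne_zero 3) ?_
  simpa using congrArg planeEmbedding h

theorem one_notMem_span_wA_neg_zA : (1 : Aring) ∉ Ideal.span {wA, -zA} := by
  intro h
  have hle : Ideal.span {wA, -zA} ≤ RingHom.ker (constantCoeff.comp planeEmbedding) := by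
    rw [Ideal.span_le]
    rintro _ (rfl | rfl) <;> simp
  simpa using hle h

theorem mk_smul_xbar_add_mk_smul_ybar (r s : Rring) :
    Ideal.Quotient.mk Jid r • xbar + Ideal.Quotient.mk Jid s • ybar =
      Jid.toCotangent ⟨r * xR + s * yR, Ideal.mem_span_pair.mpr ⟨r, s, rfl⟩⟩ := by
  show r • xbar + s • ybar = _
  rw [xbar, ybar, ← map_smul, ← map_smul, ← map_add]
  rfl

theorem exists_smul_xbar_add_smul_ybar_eq (m : Jid.Cotangent) :
    ∃ a b : Aring, a • xbar + b • ybar = m := by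
  obtain ⟨⟨v, hv⟩, rfl⟩ := Jid.toCotangent_surjective m
  obtain ⟨r, s, rfl⟩ := Ideal.mem_span_pair.mp hv
  exact ⟨_, _, mk_smul_xbar_add_mk_smul_ybar r s⟩

theorem xR_mul_wR : xR * wR = yR * zR := by
  rw [← sub_eq_zero]
  simp only [xR, yR, zR, wR, ← map_mul, ← map_sub]
  exact Ideal.Quotient.eq_zero_iff_mem.mpr (Ideal.mem_span_singleton_self _)

theorem smul_xbar_add_smul_ybar_eq_zero_iff (a b : Aring) :
    a • xbar + b • ybar = 0 ↔ ∃ c, wA * c = a ∧ -(zA * c) = b := by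
  constructor
  · obtain ⟨a, rfl⟩ := toAring_surjective a
    obtain ⟨b, rfl⟩ := toAring_surjective b
    intro h
    rw [toAring, RingHom.comp_apply, RingHom.comp_apply, mk_smul_xbar_add_mk_smul_ybar,
      Ideal.toCotangent_eq_zero] at h
    have hab : toRring (a * X 0 + b * X 1) ∈ (xyIdeal ^ 2).map toRring := by
      rw [Ideal.map_pow, ← Jid_eq_map_xyIdeal, map_add, map_mul, map_mul]
      exact h
    obtain ⟨p, hp, hpab⟩ :=
      (Ideal.mem_map_iff_of_surjective _ Ideal.Quotient.mk_surjective).mp hab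
    obtain ⟨δ, hδ⟩ := Ideal.mem_span_singleton'.mp (Ideal.Quotient.eq.mp hpab.symm)
    obtain ⟨ha, hb⟩ := planeSubst_eq_of_add_eq hp (eq_add_of_sub_eq' hδ.symm)
    refine ⟨toAring (planeSubst δ), ?_, ?_⟩
    · rw [← toAring_planeSubst a, ha, map_mul]
      exact mul_comm wA _
    · rw [← toAring_planeSubst b, hb, map_neg, map_mul]
      exact congrArg Neg.neg (mul_comm zA _)
  · rintro ⟨c, rfl, rfl⟩
    obtain ⟨r, rfl⟩ := Ideal.Quotient.mk_surjective c
    change Ideal.Quotient.mk Jid (wR * r) • xbar + Ideal.Quotient.mk Jid (-(zR * r)) • ybar = 0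
    rw [mk_smul_xbar_add_mk_smul_ybar, Ideal.toCotangent_eq_zero]
    convert zero_mem (Jid ^ 2) using 1
    linear_combination r * xR_mul_wR

theorem stmt_2 (φ : Aring →ₗ[Aring] Aring × Aring)
    (ψ : Aring × Aring →ₗ[Aring] Jid.Cotangent)
    (hφ : ∀ c : Aring, φ c = (wA * c, -(zA * c)))
    (hψ : ∀ a b : Aring, ψ (a, b) = a • xbar + b • ybar) :
    Function.Injective φ ∧
    LinearMap.ker ψ = LinearMap.range φ ∧
    Function.Surjective ψ ∧
    ¬ Module.Projective Aring Jid.Cotangent := by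
  have hinj : Function.Injective φ := fun c c' h =>
    isLeftRegular_wA (by simpa [hφ] using congrArg Prod.fst h)
  have hexact : LinearMap.ker ψ = LinearMap.range φ := by
    ext ⟨a, b⟩
    simpa [hψ, hφ, Prod.ext_iff] using smul_xbar_add_smul_ybar_eq_zero_iff a b
  have hsurj : Function.Surjective ψ := fun m => by
    obtain ⟨a, b, rfl⟩ := exists_smul_xbar_add_smul_ybar_eq m
    exact ⟨(a, b), hψ a b⟩
  refine ⟨hinj, hexact, hsurj, fun _ => ?_⟩
  obtain ⟨l, hl⟩ := (LinearMap.exact_iff.mpr hexact).exists_leftInverse_of_projective hinj hsurj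
  have hφ1 : φ 1 = (wA, -zA) := by rw [hφ, mul_one wA, mul_one zA]
  exact one_notMem_span_wA_neg_zA (one_mem_span_of_leftInverse (A := Aring) hl hφ1)
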